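/- Suppose R > 1 and there exist two distinct indices i ≠ j with Vᵢ > 0 and Vⱼ > 0 such that E_k ≠ 0 for every k ∉ {i, j}. Then the joint estimator has strictly larger variance than the marginal estimator: Var(Î_J) > Var(Î_M). -/

import Mathlib

open MeasureTheory ProbabilityTheory Finset

/-!
Both estimators are unbiased, so only their second moments differ. For independent factors
`Var(∏ Zₖ) = ∏ (Var Zₖ + (E Zₖ)²) - ∏ (E Zₖ)²`. The joint estimator averages `R` independent copies
of `∏ Xₖ`, so its variance is `R⁻¹ (∏ (Vₖ + Eₖ²) - ∏ Eₖ²)`; the marginal one is a product of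
independent sample means of variance `Vₖ / R`, so its variance is `∏ (Vₖ / R + Eₖ²) - ∏ Eₖ²`.
Expanding both products over the subsets `t` of the indices taking the `Vₖ`-factor, the term of `t`
carries the weight `R^{-|t|}` in the marginal variance and `R⁻¹` in the joint one; the term of
`t = {i, j}` is positive and `R⁻² < R⁻¹`.
-/

lemma prod_mul_add_sub_prod_lt {ι : Type*} [Fintype ι] [DecidableEq ι] {a b : ι → ℝ} {c : ℝ}
    (ha : ∀ k, 0 ≤ a k) (hb : ∀ k, 0 ≤ b k) (hc₀ : 0 < c) (hc₁ : c < 1) {i j : ι} (hij : i ≠ j)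
    (hai : 0 < a i) (haj : 0 < a j) (hb' : ∀ k, k ≠ i → k ≠ j → 0 < b k) :
    ∏ k, (c * a k + b k) - ∏ k, b k < c * (∏ k, (a k + b k) - ∏ k, b k) := by
  set P : Finset ι → ℝ := fun t ↦ (∏ k ∈ t, a k) * ∏ k ∈ univ \ t, b k
  have hP : ∀ t, 0 ≤ P t := fun t ↦
    mul_nonneg (prod_nonneg fun k _ ↦ ha k) (prod_nonneg fun k _ ↦ hb k)
  have hPij : 0 < P {i, j} := by
    refine mul_pos (by rw [prod_pair hij]; exact mul_pos hai haj) (prod_pos fun k hk ↦ ?_)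
    simp only [mem_sdiff, mem_univ, mem_insert, mem_singleton, true_and, not_or] at hk
    exact hb' k hk.1 hk.2
  have hP₀ : P ∅ = ∏ k, b k := by simp [P]
  have expand (c' : ℝ) :
      ∏ k, (c' * a k + b k) = P ∅ + ∑ t ∈ univ.powerset.erase ∅, c' ^ t.card * P t := by
    rw [prod_add, ← add_sum_erase _ _ (empty_mem_powerset _)]
    simp only [P, prod_mul_distrib, prod_const, prod_empty, card_empty, pow_zero, one_mul]
    congr 1
    exact sum_congr rfl fun t _ ↦ by ring
  have expand_one := expand 1
  simp only [one_mul, one_pow] at expand_one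
  rw [expand, expand_one, ← hP₀, add_sub_cancel_left, add_sub_cancel_left, mul_sum]
  refine sum_lt_sum (fun t ht ↦ ?_) ⟨{i, j}, by simp, ?_⟩
  · have ht : t.Nonempty := nonempty_iff_ne_empty.2 (ne_of_mem_erase ht)
    exact mul_le_mul_of_nonneg_right (pow_le_of_le_one hc₀.le hc₁.le ht.card_pos.ne') (hP t)
  · rw [card_pair hij]
    exact mul_lt_mul_of_pos_right (by nlinarith) hPij

namespace ProbabilityTheory

variable {Ω : Type*} [MeasurableSpace Ω] {μ : Measure Ω}

lemma iIndepFun.curry {ι κ 𝓧 : Type*} [MeasurableSpace 𝓧] {X : ι → κ → Ω → 𝓧}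
    (mX : ∀ i j, Measurable (X i j)) (h : iIndepFun (fun p : ι × κ ↦ X p.1 p.2) μ) :
    iIndepFun (fun i ω ↦ (X i · ω)) μ := by
  have := h.isProbabilityMeasure
  have : ∀ i j, IsProbabilityMeasure (μ.map (X i j)) :=
    fun i j ↦ Measure.isProbabilityMeasure_map (mX i j).aemeasurable
  have hrow (i : ι) : iIndepFun (X i) μ := h.precomp (g := Prod.mk i) (Prod.mk_right_injective i)
  have hjoint : μ.map (fun ω (p : ι × κ) ↦ X p.1 p.2 ω) =
      Measure.infinitePi fun p : ι × κ ↦ μ.map (X p.1 p.2) :=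
    h.map_fun_eq_infinitePi_map fun p ↦ mX p.1 p.2
  have hcurry : (fun ω i j ↦ X i j ω) =
      MeasurableEquiv.curry ι κ 𝓧 ∘ fun ω (p : ι × κ) ↦ X p.1 p.2 ω := rfl
  rw [iIndepFun_iff_map_fun_eq_infinitePi_map (fun i ↦ measurable_pi_lambda _ (mX i)), hcurry,
    ← Measure.map_map (MeasurableEquiv.curry ι κ 𝓧).measurable
      (measurable_pi_lambda _ fun p ↦ mX p.1 p.2),
    hjoint, Measure.infinitePi_map_curry fun i j ↦ μ.map (X i j)]
  congr with i : 1
  exact ((hrow i).map_fun_eq_infinitePi_map (mX i)).symm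

section Products

variable {ι : Type*} {X : ι → Ω → ℝ}

lemma iIndepFun.integrable_finsetProd (h : iIndepFun X μ) (hX : ∀ i, Integrable (X i) μ)
    (s : Finset ι) : Integrable (∏ i ∈ s, X i) μ := by
  have := h.isProbabilityMeasure
  induction s using Finset.cons_induction with
  | empty => exact integrable_const 1
  | cons i s hi ih =>
    rw [prod_cons, mul_comm]
    exact (h.indepFun_finsetProd_of_notMem₀ (fun i ↦ (hX i).aemeasurable) hi).integrable_mul ih
      (hX i)

variable [Fintype ι]

lemma iIndepFun.memLp_two_fun_prod (h : iIndepFun X μ) (hX : ∀ i, MemLp (X i) 2 μ) :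
    MemLp (fun ω ↦ ∏ i, X i ω) 2 μ := by
  have hsq : iIndepFun (fun i ω ↦ X i ω ^ 2) μ := h.comp (fun _ x ↦ x ^ 2) fun _ ↦ by fun_prop
  rw [memLp_two_iff_integrable_sq
    (Finset.aestronglyMeasurable_fun_prod _ fun i _ ↦ (hX i).aestronglyMeasurable)]
  simp_rw [← prod_pow, ← prod_fn]
  exact hsq.integrable_finsetProd (fun i ↦ (hX i).integrable_sq) univ

lemma integral_sq_eq_variance_add_sq [IsProbabilityMeasure μ] {Y : Ω → ℝ} (hY : MemLp Y 2 μ) :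
    ∫ ω, Y ω ^ 2 ∂μ = variance Y μ + (∫ ω, Y ω ∂μ) ^ 2 := by
  rw [variance_eq_sub hY]
  simp

lemma iIndepFun.variance_fun_prod (h : iIndepFun X μ) (hX : ∀ i, MemLp (X i) 2 μ) :
    variance (fun ω ↦ ∏ i, X i ω) μ =
      ∏ i, (variance (X i) μ + (∫ ω, X i ω ∂μ) ^ 2) - ∏ i, (∫ ω, X i ω ∂μ) ^ 2 := by
  have := h.isProbabilityMeasure
  have hsq : iIndepFun (fun i ω ↦ X i ω ^ 2) μ := h.comp (fun _ x ↦ x ^ 2) fun _ ↦ by fun_prop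
  rw [variance_eq_sub (h.memLp_two_fun_prod hX)]
  simp only [Pi.pow_apply, ← prod_pow]
  rw [hsq.integral_fun_prod_eq_prod_integral fun i ↦ ((hX i).integrable_sq).aestronglyMeasurable,
    h.integral_fun_prod_eq_prod_integral fun i ↦ (hX i).aestronglyMeasurable]
  simp only [integral_sq_eq_variance_add_sq (hX _), prod_pow]

end Products

section SampleMean

variable {n : ℕ} {f : Fin n → Ω → ℝ}

lemma integral_mean (hn : n ≠ 0) (hf : ∀ r, Integrable (f r) μ) {m : ℝ}
    (hm : ∀ r, ∫ ω, f r ω ∂μ = m) :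
    ∫ ω, (n : ℝ)⁻¹ * ∑ r, f r ω ∂μ = m := by
  rw [integral_const_mul, integral_finsetSum _ fun r _ ↦ hf r]
  simp [hm, hn]

lemma IndepFun.variance_mean (hf : ∀ r, MemLp (f r) 2 μ)
    (hindep : Pairwise fun r s ↦ f r ⟂ᵢ[μ] f s) {v : ℝ} (hv : ∀ r, variance (f r) μ = v) :
    variance (fun ω ↦ (n : ℝ)⁻¹ * ∑ r, f r ω) μ = (n : ℝ)⁻¹ * v := by
  rw [variance_const_mul, ← sum_fn, IndepFun.variance_sum (fun r _ ↦ hf r)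
    fun r _ s _ hrs ↦ hindep hrs]
  simp only [hv, sum_const, card_univ, Fintype.card_fin, nsmul_eq_mul]
  rcases eq_or_ne n 0 with rfl | hn
  · simp
  · field_simp

end SampleMean

end ProbabilityTheory

theorem variance_joint_gt_marginal_general
    {Ω : Type*} [MeasurableSpace Ω] (μ : Measure Ω) [IsProbabilityMeasure μ]
    (N R : ℕ) (hR : 1 < R)
    (X : Fin N → Ω → ℝ)
    (hXL2 : ∀ i, MemLp (X i) 2 μ)
    (Y : Fin N → Fin R → Ω → ℝ)
    (hYmeas : ∀ i r, Measurable (Y i r))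
    (hYindep : iIndepFun
      (fun p : Fin N × Fin R => Y p.1 p.2) μ)
    (hYdist : ∀ i r, IdentDistrib (Y i r) (X i) μ μ)
    (i j : Fin N) (hij : i ≠ j)
    (hVi : 0 < variance (X i) μ) (hVj : 0 < variance (X j) μ)
    (hE : ∀ k, k ≠ i → k ≠ j → (∫ ω, X k ω ∂μ) ≠ 0) :
    variance (fun ω => ∏ i', ((R : ℝ)⁻¹ * ∑ r, Y i' r ω)) μ
      < variance (fun ω => (R : ℝ)⁻¹ * ∑ r, ∏ i', Y i' r ω) μ := by
  have hYL2 (k : Fin N) (r : Fin R) : MemLp (Y k r) 2 μ := (hYdist k r).symm.memLp_snd (hXL2 k)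
  have hcol (r : Fin R) : iIndepFun (Y · r) μ :=
    hYindep.precomp (g := fun k ↦ (k, r)) (Prod.mk_left_injective r)
  have hrow (k : Fin N) : iIndepFun (Y k) μ :=
    hYindep.precomp (g := Prod.mk k) (Prod.mk_right_injective k)
  have hmeans : iIndepFun (fun k ω ↦ (R : ℝ)⁻¹ * ∑ r, Y k r ω) μ :=
    hYindep.curry hYmeas |>.comp (fun _ y ↦ (R : ℝ)⁻¹ * ∑ r, y r) fun _ ↦ by fun_prop
  have hsamples : iIndepFun (fun r ω ↦ ∏ k, Y k r ω) μ :=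
    (hYindep.precomp (Equiv.prodComm (Fin R) (Fin N)).injective).curry (fun r k ↦ hYmeas k r)
      |>.comp (fun _ y ↦ ∏ k, y k) fun _ ↦ by fun_prop
  have hmean_var (k : Fin N) : variance (fun ω ↦ (R : ℝ)⁻¹ * ∑ r, Y k r ω) μ =
      (R : ℝ)⁻¹ * variance (X k) μ :=
    IndepFun.variance_mean (hYL2 k) (fun r s hrs ↦ (hrow k).indepFun hrs)
      fun r ↦ (hYdist k r).variance_eq
  have hmean_int (k : Fin N) : ∫ ω, (R : ℝ)⁻¹ * ∑ r, Y k r ω ∂μ = ∫ ω, X k ω ∂μ :=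
    integral_mean (by omega) (fun r ↦ (hYL2 k r).integrable one_le_two)
      fun r ↦ (hYdist k r).integral_eq
  have hsample_var (r : Fin R) : variance (fun ω ↦ ∏ k, Y k r ω) μ =
      ∏ k, (variance (X k) μ + (∫ ω, X k ω ∂μ) ^ 2) - ∏ k, (∫ ω, X k ω ∂μ) ^ 2 := by
    simp only [(hcol r).variance_fun_prod (hYL2 · r), (hYdist _ r).variance_eq,
      (hYdist _ r).integral_eq]
  rw [hmeans.variance_fun_prod fun k ↦ (memLp_finsetSum _ fun r _ ↦ hYL2 k r).const_mul _,
    IndepFun.variance_mean (fun r ↦ (hcol r).memLp_two_fun_prod (hYL2 · r))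
      (fun r s hrs ↦ hsamples.indepFun hrs) hsample_var]
  simp only [hmean_var, hmean_int]
  exact prod_mul_add_sub_prod_lt (fun k ↦ variance_nonneg _ _) (fun k ↦ sq_nonneg _)
    (by positivity) (inv_lt_one_of_one_lt₀ (by exact_mod_cast hR)) hij hVi hVj
    fun k hki hkj ↦ sq_pos_of_ne_zero (hE k hki hkj)

/-- If `R > 1` and there are two distinct indices `i ≠ j` with
`Vᵢ > 0` and `Vⱼ > 0` such that `E_k ≠ 0` for every `k ∉ {i, j}`, then the joint
estimator has strictly larger variance than the marginal estimator. -/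
theorem variance_joint_gt_marginal
    {Ω : Type*} [MeasurableSpace Ω] (μ : Measure Ω) [IsProbabilityMeasure μ]
    (N R : ℕ) (hN : 2 ≤ N) (hR : 1 < R)
    (X : Fin N → Ω → ℝ)
    (hXmeas : ∀ i, Measurable (X i))
    (hXL2 : ∀ i, MemLp (X i) 2 μ)
    (hXindep : iIndepFun X μ)
    (Y : Fin N → Fin R → Ω → ℝ)
    (hYmeas : ∀ i r, Measurable (Y i r))
    (hYindep : iIndepFun
      (fun p : Fin N × Fin R => Y p.1 p.2) μ)
    (hYdist : ∀ i r, IdentDistrib (Y i r) (X i) μ μ)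
    (i j : Fin N) (hij : i ≠ j)
    (hVi : 0 < variance (X i) μ) (hVj : 0 < variance (X j) μ)
    (hE : ∀ k, k ≠ i → k ≠ j → (∫ ω, X k ω ∂μ) ≠ 0) :
    variance (fun ω => ∏ i', ((R : ℝ)⁻¹ * ∑ r, Y i' r ω)) μ
      < variance (fun ω => (R : ℝ)⁻¹ * ∑ r, ∏ i', Y i' r ω) μ :=
  variance_joint_gt_marginal_general μ N R hR X hXL2 Y hYmeas hYindep hYdist i j hij hVi hVj hE
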